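/- If a partition tree for strings X, Y of length n has depth D and ED(X, Y) ≤ k, then the number of nodes v of the tree that are not matched — i.e., for which there is no shift s* ∈ [−k, k] with X_v = Y[i+s* .. j+s*) where v spans leaves i through j−1 — is at most k·D. -/

import Mathlib

/-- Cost structure for Levenshtein edit distance (as in the former Mathlib `Levenshtein.Cost`). -/
structure Levenshtein.Cost (α β δ : Type*) where
  /-- Cost to delete an element from a list. -/
  delete : α → δ
  /-- Cost in insert an element into a list. -/
  insert : β → δ
  /-- Cost to substitute one element for another in a list. -/
  substitute : α → β → δ

/-- The default cost structure, for which all operations cost `1`. -/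
@[simps]
def Levenshtein.defaultCost {α : Type*} [DecidableEq α] : Levenshtein.Cost α α ℕ where
  delete _ := 1
  insert _ := 1
  substitute a b := if a = b then 0 else 1

/-- (Implementation detail for `levenshtein`, as in former Mathlib.) -/
def Levenshtein.impl {α β δ : Type*} [AddZeroClass δ] [Min δ] (C : Levenshtein.Cost α β δ)
    (xs : List α) (y : β) (d : {r : List δ // 0 < r.length}) : {r : List δ // 0 < r.length} :=
  let ⟨ds, w⟩ := d
  xs.zip (ds.zip ds.tail) |>.foldr
    (init := ⟨[C.insert y + ds.getLast (List.length_pos_iff.mp w)], by simp⟩)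
    (fun ⟨x, d₀, d₁⟩ ⟨r, w⟩ =>
      ⟨min (C.delete x + r[0]) (min (C.insert y + d₀) (C.substitute x y + d₁)) :: r, by simp⟩)

/-- `suffixLevenshtein C xs ys` computes the Levenshtein distance from each suffix of `xs`
to `ys` (as in former Mathlib). -/
def suffixLevenshtein {α β δ : Type*} [AddZeroClass δ] [Min δ] (C : Levenshtein.Cost α β δ)
    (xs : List α) (ys : List β) : {r : List δ // 0 < r.length} :=
  ys.foldr
    (Levenshtein.impl C xs)
    (xs.foldr (init := ⟨[0], by simp⟩) (fun a ⟨r, w⟩ => ⟨(C.delete a + r[0]) :: r, by simp⟩))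

/-- The Levenshtein distance between two lists (as in former Mathlib). -/
def levenshtein {α β δ : Type*} [AddZeroClass δ] [Min δ] (C : Levenshtein.Cost α β δ)
    (xs : List α) (ys : List β) : δ :=
  let ⟨r, w⟩ := suffixLevenshtein C xs ys
  r[0]

/-- Levenshtein edit distance between two lists (unit costs). -/
def ED {α : Type*} [DecidableEq α] (X Y : List α) : ℕ :=
  levenshtein Levenshtein.defaultCost X Y

/-- The fragment `X[a..b)` (with out-of-range indices clamped). -/
def strSlice {α : Type*} (X : List α) (a b : ℕ) : List α := (X.drop a).take (b - a)

/-- The fragment `Y[a..b)` for integer indices (clamped to the valid range). -/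
def strSliceZ {α : Type*} (Y : List α) (a b : ℤ) : List α :=
  (Y.drop a.toNat).take (b.toNat - a.toNat)

/-- A (node of a) partition tree: a leaf spans one position, an internal node records
the interval of leaves it spans and its list of children. -/
inductive PTree where
  | leaf (i : ℕ) : PTree
  | node (lo hi : ℕ) (children : List PTree) : PTree

mutual
/-- Well-formedness: the tree `t` spans exactly the interval `[lo, hi)` of leaves and
the children of each node span consecutive subintervals. -/
inductive PTree.WF : PTree → ℕ → ℕ → Prop where
  | leaf (i : ℕ) : PTree.WF (.leaf i) i (i + 1)
  | node (lo hi : ℕ) (cs : List PTree) (hne : cs ≠ []) (h : PTree.WFs cs lo hi) :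
      PTree.WF (.node lo hi cs) lo hi
/-- A list of trees spans consecutive intervals covering `[a, c)`. -/
inductive PTree.WFs : List PTree → ℕ → ℕ → Prop where
  | nil (a : ℕ) : PTree.WFs [] a a
  | cons (t : PTree) (ts : List PTree) (a b c : ℕ) :
      PTree.WF t a b → PTree.WFs ts b c → PTree.WFs (t :: ts) a c
end

/-- The height of a partition tree: maximum distance from the root to a leaf. -/
def PTree.height : PTree → ℕ
  | .leaf _ => 0
  | .node _ _ cs => (cs.attach.map (fun c => PTree.height c.1)).foldr max 0 + 1
termination_by t => sizeOf t
decreasing_by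
  have := List.sizeOf_lt_of_mem c.2
  simp only [PTree.node.sizeOf_spec]
  omega

/-- A node spanning `[lo, hi)` is matched if some shift `s* ∈ [−k, k]` gives an exact
match `X[lo..hi) = Y[lo+s*..hi+s*)`. -/
def Matched {α : Type*} (X Y : List α) (k : ℕ) (lo hi : ℕ) : Prop :=
  ∃ s : ℤ, -(k : ℤ) ≤ s ∧ s ≤ k ∧
    strSlice X lo hi = strSliceZ Y ((lo : ℤ) + s) ((hi : ℤ) + s)

open Classical in
/-- The number of unmatched nodes of a partition tree. -/
noncomputable def countUnmatched {α : Type*} (X Y : List α) (k : ℕ) : PTree → ℕ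
  | .leaf i => if Matched X Y k i (i + 1) then 0 else 1
  | .node lo hi cs =>
      (if Matched X Y k lo hi then 0 else 1) +
        (cs.attach.map (fun c => countUnmatched X Y k c.1)).sum
termination_by t => sizeOf t
decreasing_by
  have := List.sizeOf_lt_of_mem c.2
  simp only [PTree.node.sizeOf_spec]
  omega


/-!
Fix an alignment of `X` with `Y` of cost at most `k`. A node spanning `[a, b)` is aligned with a
fragment of `Y` starting at some `a'`, using `m` of the edits; the other edits keep
`|a' - a| ≤ k - m`, so a node with `m = 0` is matched with the shift `a' - a`. The children of a
node share out its `m` edits, hence by induction a subtree with `D` levels whose span costs `m`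
edits has at most `m * D` unmatched nodes: at most `m` per level.
-/

namespace Levenshtein
variable {α β δ : Type*} [AddZeroClass δ] [Min δ] (C : Cost α β δ)

theorem exists_impl_cons (x : α) (xs : List α) (y : β) (d₀ : δ)
    (d : {r : List δ // 0 < r.length}) :
    ∃ e, (impl C (x :: xs) y ⟨d₀ :: d.1, by simp⟩).1 = e :: (impl C xs y d).1 :=
  match d with
  | ⟨_ :: _, _⟩ => ⟨_, rfl⟩

theorem impl_length (xs : List α) (y : β) (d : {r : List δ // 0 < r.length})
    (h : d.1.length = xs.length + 1) : (impl C xs y d).1.length = xs.length + 1 := by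
  induction xs generalizing d with
  | nil => rfl
  | cons x xs ih =>
    obtain ⟨_ | ⟨d₀, ds⟩, w⟩ := d
    · simp at w
    simp only [List.length_cons] at h
    obtain ⟨e, he⟩ := exists_impl_cons C x xs y d₀ ⟨ds, by omega⟩
    rw [he, List.length_cons, ih ⟨ds, _⟩ (by simpa using h), List.length_cons]

end Levenshtein

open Levenshtein

section
variable {α β δ : Type*} [AddZeroClass δ] [Min δ] (C : Cost α β δ)

theorem levenshtein_eq_getElem_zero (xs : List α) (ys : List β) :
    levenshtein C xs ys = (suffixLevenshtein C xs ys).1[0]'(suffixLevenshtein C xs ys).2 :=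
  rfl

theorem suffixLevenshtein_length (xs : List α) (ys : List β) :
    (suffixLevenshtein C xs ys).1.length = xs.length + 1 := by
  induction ys with
  | nil => induction xs with
    | nil => rfl
    | cons x xs ih => exact congrArg (· + 1) ih
  | cons y ys ih => exact impl_length C xs y _ ih

theorem suffixLevenshtein_cons_left (x : α) (xs : List α) (ys : List β) :
    (suffixLevenshtein C (x :: xs) ys).1 =
      levenshtein C (x :: xs) ys :: (suffixLevenshtein C xs ys).1 := by
  suffices h : ∃ e, (suffixLevenshtein C (x :: xs) ys).1 = e :: (suffixLevenshtein C xs ys).1 by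
    obtain ⟨e, he⟩ := h
    simp only [levenshtein_eq_getElem_zero, he, List.getElem_cons_zero]
  induction ys with
  | nil => exact ⟨_, rfl⟩
  | cons y ys ih =>
    obtain ⟨e, he⟩ := ih
    have hS : suffixLevenshtein C (x :: xs) ys =
        ⟨e :: (suffixLevenshtein C xs ys).1, by simp⟩ :=
      Subtype.ext he
    change ∃ e, (impl C (x :: xs) y (suffixLevenshtein C (x :: xs) ys)).1 = _
    rw [hS]
    exact exists_impl_cons C x xs y e _

theorem suffixLevenshtein_nil_left (ys : List β) :
    (suffixLevenshtein C [] ys).1 = [levenshtein C [] ys] := by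
  obtain ⟨d, hd⟩ := List.length_eq_one_iff.mp (suffixLevenshtein_length C [] ys)
  simp only [levenshtein_eq_getElem_zero, hd, List.getElem_cons_zero]

@[simp] theorem levenshtein_cons_nil (x : α) (xs : List α) :
    levenshtein C (x :: xs) [] = C.delete x + levenshtein C xs [] := rfl

@[simp] theorem levenshtein_nil_cons (y : β) (ys : List β) :
    levenshtein C [] (y :: ys) = C.insert y + levenshtein C [] ys := by
  have hS : suffixLevenshtein C [] ys = ⟨[levenshtein C [] ys], by simp⟩ :=
    Subtype.ext (suffixLevenshtein_nil_left C ys)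
  change (impl C [] y (suffixLevenshtein C [] ys)).1[0]'(impl C [] y _).2 = _
  rw [hS]
  rfl

theorem levenshtein_cons_cons (x : α) (xs : List α) (y : β) (ys : List β) :
    levenshtein C (x :: xs) (y :: ys) =
      min (C.delete x + levenshtein C xs (y :: ys))
        (min (C.insert y + levenshtein C (x :: xs) ys)
          (C.substitute x y + levenshtein C xs ys)) := by
  obtain ⟨rest, hrest⟩ :
      ∃ rest, (suffixLevenshtein C xs ys).1 = levenshtein C xs ys :: rest := by
    cases xs with
    | nil => exact ⟨[], suffixLevenshtein_nil_left C ys⟩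
    | cons x' xs' => exact ⟨_, suffixLevenshtein_cons_left C x' xs' ys⟩
  have h₁ : suffixLevenshtein C xs ys = ⟨levenshtein C xs ys :: rest, by simp⟩ :=
    Subtype.ext hrest
  have h₂ : suffixLevenshtein C (x :: xs) ys =
      ⟨levenshtein C (x :: xs) ys :: levenshtein C xs ys :: rest, by simp⟩ :=
    Subtype.ext (by rw [suffixLevenshtein_cons_left, hrest])
  change (impl C (x :: xs) y (suffixLevenshtein C (x :: xs) ys)).1[0]'(impl C _ y _).2 =
    min (C.delete x + (impl C xs y (suffixLevenshtein C xs ys)).1[0]'(impl C xs y _).2) _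
  rw [h₁, h₂]
  rfl

end

section EditDistance
variable {α : Type*} [DecidableEq α]

@[simp] theorem ED_nil_left (Y : List α) : ED [] Y = Y.length := by
  induction Y with
  | nil => rfl
  | cons y ys ih => simp [ED, ← ih, add_comm]

@[simp] theorem ED_nil_right (X : List α) : ED X [] = X.length := by
  induction X with
  | nil => rfl
  | cons x xs ih => simp [ED, ← ih, add_comm]

theorem ED_cons_cons (x y : α) (xs ys : List α) :
    ED (x :: xs) (y :: ys) = min (1 + ED xs (y :: ys))
      (min (1 + ED (x :: xs) ys) ((if x = y then 0 else 1) + ED xs ys)) := by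
  simp [ED, levenshtein_cons_cons]

theorem ED_cons_left_le (x : α) (xs Y : List α) : ED (x :: xs) Y ≤ 1 + ED xs Y := by
  cases Y with
  | nil => simp [add_comm]
  | cons y ys => rw [ED_cons_cons]; omega

theorem ED_cons_right_le (X : List α) (y : α) (ys : List α) :
    ED X (y :: ys) ≤ 1 + ED X ys := by
  cases X with
  | nil => simp [add_comm]
  | cons x xs => rw [ED_cons_cons]; omega

theorem natAbs_length_sub_le_ED (X Y : List α) :
    ((X.length : ℤ) - Y.length).natAbs ≤ ED X Y := by
  induction X generalizing Y with
  | nil => simp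
  | cons x xs ihX =>
    induction Y with
    | nil => simp only [ED_nil_right, List.length_cons, List.length_nil]; omega
    | cons y ys ihY =>
      have := ihX (y :: ys)
      have := ihX ys
      simp only [List.length_cons] at *
      rw [ED_cons_cons]
      split_ifs <;> omega

theorem eq_of_ED_eq_zero {X Y : List α} (h : ED X Y = 0) : X = Y := by
  induction X generalizing Y with
  | nil => simpa [eq_comm] using h
  | cons x xs ih =>
    cases Y with
    | nil => simp at h
    | cons y ys =>
      rw [ED_cons_cons] at h
      split_ifs at h with hxy
      · rw [hxy, ih (Y := ys) (by omega)]
      · omega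

theorem exists_append_eq_ED_add_ED_le (X₁ X₂ Y : List α) :
    ∃ Y₁ Y₂, Y₁ ++ Y₂ = Y ∧ ED X₁ Y₁ + ED X₂ Y₂ ≤ ED (X₁ ++ X₂) Y := by
  induction X₁ generalizing Y with
  | nil => exact ⟨[], Y, rfl, by simp⟩
  | cons x xs ihX =>
    induction Y with
    | nil => exact ⟨[], [], rfl, by simp only [ED_nil_right, List.length_append, le_refl]⟩
    | cons y ys ihY =>
      have hrec := ED_cons_cons x y (xs ++ X₂) ys
      rw [← List.cons_append] at hrec
      rcases (by omega : ED (x :: xs ++ X₂) (y :: ys) = 1 + ED (xs ++ X₂) (y :: ys) ∨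
          ED (x :: xs ++ X₂) (y :: ys) = 1 + ED (x :: xs ++ X₂) ys ∨
          ED (x :: xs ++ X₂) (y :: ys) = (if x = y then 0 else 1) + ED (xs ++ X₂) ys)
        with hdel | hins | hsub
      · obtain ⟨Y₁, Y₂, hY, hle⟩ := ihX (y :: ys)
        exact ⟨Y₁, Y₂, hY, by have := ED_cons_left_le x xs Y₁; omega⟩
      · obtain ⟨Y₁, Y₂, rfl, hle⟩ := ihY
        exact ⟨y :: Y₁, Y₂, rfl, by have := ED_cons_right_le (x :: xs) y Y₁; omega⟩
      · obtain ⟨Y₁, Y₂, rfl, hle⟩ := ihX ys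
        exact ⟨y :: Y₁, Y₂, rfl, by rw [ED_cons_cons]; omega⟩

end EditDistance

section Fragments
variable {α : Type*}

theorem strSlice_length {X : List α} {a b : ℕ} (hb : b ≤ X.length) :
    (strSlice X a b).length = b - a := by
  simp only [strSlice, List.length_take, List.length_drop]; omega

theorem strSlice_append (X : List α) {a b c : ℕ} (hab : a ≤ b) (hbc : b ≤ c) :
    strSlice X a b ++ strSlice X b c = strSlice X a c := by
  have hlen : c - a = (b - a) + (c - b) := by omega
  rw [strSlice, strSlice, strSlice, hlen, List.take_add, List.drop_drop, Nat.add_sub_cancel' hab]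

theorem matched_of_prefix_drop {X Y : List α} {k lo hi a' : ℕ} (hhi : hi ≤ X.length)
    (hpre : strSlice X lo hi <+: Y.drop a') (hs : ((a' : ℤ) - lo).natAbs ≤ k) :
    Matched X Y k lo hi := by
  refine ⟨a' - lo, by omega, by omega, ?_⟩
  have h₁ : ((lo : ℤ) + (a' - lo)).toNat = a' := by omega
  have h₂ : ((hi : ℤ) + (a' - lo)).toNat - a' = hi - lo := by omega
  rw [strSliceZ, h₁, h₂, ← strSlice_length hhi]
  exact List.prefix_iff_eq_take.mp hpre

end Fragments

mutual
theorem PTree.WF.le {t : PTree} {a b : ℕ} : PTree.WF t a b → a ≤ b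
  | .leaf _ => Nat.le_succ _
  | .node _ _ _ _ h => h.le
theorem PTree.WFs.le {cs : List PTree} {a c : ℕ} : PTree.WFs cs a c → a ≤ c
  | .nil _ => le_rfl
  | .cons _ _ _ _ _ ht hts => ht.le.trans hts.le
end

theorem PTree.height_node (lo hi : ℕ) (cs : List PTree) :
    (PTree.node lo hi cs).height = (cs.map PTree.height).foldr max 0 + 1 := by
  rw [PTree.height, List.attach_map_val]

section Alignment
variable {α : Type*} [DecidableEq α] {X Y : List α} {k : ℕ}

def Alignable (X Y : List α) (k a b m : ℕ) : Prop :=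
  ∃ (a' : ℕ) (Z : List α), Z <+: Y.drop a' ∧ ED (strSlice X a b) Z ≤ m ∧
    ((a' : ℤ) - a).natAbs + m ≤ k

theorem alignable_of_ED_le {n : ℕ} (hX : X.length = n) (hED : ED X Y ≤ k) :
    Alignable X Y k 0 n k :=
  ⟨0, Y, by simp, by simpa [strSlice, ← hX] using hED, by simp⟩

theorem Alignable.split {a b c m : ℕ} (h : Alignable X Y k a c m) (hab : a ≤ b) (hbc : b ≤ c)
    (hc : c ≤ X.length) :
    ∃ m₁ ≤ m, Alignable X Y k a b m₁ ∧ Alignable X Y k b c (m - m₁) := by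
  obtain ⟨a', Z, hZ, hED, hs⟩ := h
  obtain ⟨Z₁, Z₂, rfl, hsplit⟩ :=
    exists_append_eq_ED_add_ED_le (strSlice X a b) (strSlice X b c) Z
  rw [strSlice_append X hab hbc] at hsplit
  have hlen := natAbs_length_sub_le_ED (strSlice X a b) Z₁
  rw [strSlice_length (hbc.trans hc)] at hlen
  have hZ₂ : Z₂ <+: Y.drop (a' + Z₁.length) := by
    simpa [List.drop_left] using hZ.drop Z₁.length
  exact ⟨ED (strSlice X a b) Z₁, by omega,
    ⟨a', Z₁, (List.prefix_append _ _).trans hZ, le_rfl, by omega⟩,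
    ⟨a' + Z₁.length, Z₂, hZ₂, by omega, by omega⟩⟩

open Classical in
theorem Alignable.ite_matched_le {a b m : ℕ} (h : Alignable X Y k a b m) (hb : b ≤ X.length) :
    (if Matched X Y k a b then 0 else 1) ≤ m := by
  rcases Nat.eq_zero_or_pos m with rfl | hm
  · obtain ⟨a', Z, hZ, hED, hs⟩ := h
    rw [← eq_of_ED_eq_zero (Nat.le_zero.mp hED)] at hZ
    rw [if_pos (matched_of_prefix_drop hb hZ (by omega))]
  · split_ifs <;> omega

mutual
theorem PTree.WF.countUnmatched_le {t : PTree} {a b m D : ℕ} (ht : PTree.WF t a b)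
    (hb : b ≤ X.length) (h : Alignable X Y k a b m) (hD : t.height < D) :
    countUnmatched X Y k t ≤ m * D :=
  match t, ht with
  | .leaf _, .leaf _ => by
    rw [countUnmatched]
    exact (h.ite_matched_le hb).trans (Nat.le_mul_of_pos_right m (by rwa [PTree.height] at hD))
  | .node lo hi cs, .node _ _ _ _ hcs => by
    rw [PTree.height_node] at hD
    obtain ⟨D, rfl⟩ : ∃ D', D = D' + 1 := ⟨D - 1, by omega⟩
    have hchildren : ∀ c ∈ cs, c.height < D := fun c hc =>
      (List.le_max_of_le' 0 (List.mem_map_of_mem hc) le_rfl).trans_lt (by omega)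
    rw [countUnmatched, List.attach_map_val, Nat.mul_succ, add_comm]
    exact Nat.add_le_add (hcs.sum_countUnmatched_le hb h hchildren) (h.ite_matched_le hb)
theorem PTree.WFs.sum_countUnmatched_le {cs : List PTree} {a c m D : ℕ} (hcs : PTree.WFs cs a c)
    (hc : c ≤ X.length) (h : Alignable X Y k a c m) (hD : ∀ t ∈ cs, t.height < D) :
    (cs.map (countUnmatched X Y k)).sum ≤ m * D :=
  match cs, hcs with
  | [], .nil _ => by simp
  | t :: ts, .cons _ _ _ _ _ ht hts => by
    obtain ⟨m₁, hm₁, h₁, h₂⟩ := h.split ht.le hts.le hc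
    rw [List.map_cons, List.sum_cons, ← Nat.add_sub_cancel' hm₁, Nat.add_mul]
    exact Nat.add_le_add (ht.countUnmatched_le (hts.le.trans hc) h₁ (hD t (by simp)))
      (hts.sum_countUnmatched_le hc h₂ fun u hu => hD u (by simp [hu]))
end

end Alignment

/-- If a partition tree for equal length-`n` strings `X, Y` has depth (number of levels)
at most `D` and `ED(X, Y) ≤ k`, then at most `k·D` of its nodes are unmatched. -/
theorem unmatched_le {α : Type*} [DecidableEq α] (X Y : List α) (n k D : ℕ) (t : PTree)
    (hX : X.length = n) (hY : Y.length = n) (hwf : PTree.WF t 0 n)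
    (hED : ED X Y ≤ k) (hD : PTree.height t + 1 ≤ D) :
    countUnmatched X Y k t ≤ k * D :=
  hwf.countUnmatched_le hX.ge (alignable_of_ED_le hX hED) hD
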